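/- arXiv:2307.14939 — 7 statements merged into one kernel-verified Lean document; each statement's English description precedes it below -/
import Mathlib

section
/- Let w be a group word and G a group such that the set of w-values in G is finite with at most m elements. Then the order of the commutator subgroup w(G)' of the verbal subgroup w(G) is bounded by a function of m (and w). -/
/-- The set of `w`-values of a group word `w` (an element of a free group) in a group `G`:
elements of the form `w(g_1, ..., g_k)`. -/
def wordValues {α : Type*} (w : FreeGroup α) (G : Type*) [Group G] : Set G :=
  {g : G | ∃ f : α → G, FreeGroup.lift f w = g}

/-- The verbal subgroup `w(G)`: the subgroup generated by all `w`-values. -/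
def verbalSubgroup {α : Type*} (w : FreeGroup α) (G : Type*) [Group G] : Subgroup G :=
  Subgroup.closure (wordValues w G)

/-!
The set `X` of `w`-values is invariant under conjugation, so `H = w(G) = ⟨X⟩` acts on `X` by
conjugation. The kernel of this action centralizes `X`, hence all of `H`, so the centre of `H`
has index at most `|X|!`. Commutators in `H` depend only on cosets of the centre, so `H` has
at most `(|X|!)²` commutators, and Schur's theorem bounds `|H'|` in terms of that number.
-/

open Subgroup
open scoped commutatorElement

theorem Subgroup.cardCommutatorBound_mono : Monotone cardCommutatorBound := by
  intro a b hab
  rcases Nat.eq_zero_or_pos a with rfl | ha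
  · exact Nat.one_le_iff_ne_zero.mpr (by unfold cardCommutatorBound; simp)
  · have hb : 1 ≤ b := ha.trans_le hab
    unfold cardCommutatorBound
    gcongr
    exact Nat.one_le_pow _ _ hb

section Commutators

variable {K : Type*} [Group K]

theorem commutatorElement_mul_mem_center_left {z : K} (hz : z ∈ center K) (a b : K) :
    ⁅a * z, b⁆ = ⁅a, b⁆ := by
  rw [commutatorElement_def, commutatorElement_def, mul_assoc a z b, ← mem_center_iff.mp hz b]
  group

theorem commutatorElement_mul_mem_center_right {z : K} (hz : z ∈ center K) (a b : K) :
    ⁅a, b * z⁆ = ⁅a, b⁆ := by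
  rw [← inv_inj, commutatorElement_inv, commutatorElement_inv,
    commutatorElement_mul_mem_center_left hz]

theorem commutatorElement_out_mk_center (a b : K) :
    ⁅(a : K ⧸ center K).out, (b : K ⧸ center K).out⁆ = ⁅a, b⁆ := by
  have ha : (a : K ⧸ center K).out⁻¹ * a ∈ center K := QuotientGroup.leftRel_apply.mp
    (Quotient.exact (QuotientGroup.out_eq' (a : K ⧸ center K)))
  have hb : (b : K ⧸ center K).out⁻¹ * b ∈ center K := QuotientGroup.leftRel_apply.mp
    (Quotient.exact (QuotientGroup.out_eq' (b : K ⧸ center K)))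
  rw [← commutatorElement_mul_mem_center_left ha, ← commutatorElement_mul_mem_center_right hb,
    mul_inv_cancel_left, mul_inv_cancel_left]

theorem surjective_commutatorSet_quotient_center :
    Function.Surjective fun p : (K ⧸ center K) × (K ⧸ center K) =>
      (⟨⁅p.1.out, p.2.out⁆, commutator_mem_commutatorSet _ _⟩ : commutatorSet K) := by
  rintro ⟨_, a, b, rfl⟩
  exact ⟨(a, b), Subtype.ext (commutatorElement_out_mk_center a b)⟩

variable [(center K).FiniteIndex]

instance finite_commutatorSet_of_finiteIndex_center : Finite (commutatorSet K) :=
  Finite.of_surjective _ surjective_commutatorSet_quotient_center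

theorem card_commutatorSet_le_index_center_sq :
    Nat.card (commutatorSet K) ≤ (center K).index ^ 2 :=
  (Nat.card_le_card_of_surjective _ surjective_commutatorSet_quotient_center).trans
    (by rw [Nat.card_prod, sq]; rfl)

theorem card_commutator_le_of_finiteIndex_center :
    Nat.card (_root_.commutator K) ≤ cardCommutatorBound ((center K).index ^ 2) :=
  card_commutator_le_of_finite_commutatorSet K |>.trans
    (cardCommutatorBound_mono card_commutatorSet_le_index_center_sq)

end Commutators

section ConjugationInvariant

variable {G : Type*} [Group G]

def conjPermHom (X : SubMulAction (ConjAct G) G) (H : Subgroup G) : H →* Equiv.Perm X :=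
  (MulAction.toPermHom (ConjAct G) X).comp (ConjAct.toConjAct.toMonoidHom.comp H.subtype)

theorem ker_conjPermHom_closure_le_center (X : SubMulAction (ConjAct G) G) :
    (conjPermHom X (closure (X : Set G))).ker ≤ center (closure (X : Set G)) := by
  intro h hh
  have hX : (h : G) ∈ centralizer (X : Set G) := by
    intro x hx
    have hfix : ConjAct.toConjAct (h : G) • x = x :=
      congrArg Subtype.val (DFunLike.congr_fun (MonoidHom.mem_ker.mp hh) (⟨x, hx⟩ : X))
    rw [ConjAct.smul_def, ConjAct.ofConjAct_toConjAct, mul_inv_eq_iff_eq_mul] at hfix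
    exact hfix.symm
  rw [← centralizer_closure] at hX
  exact mem_center_iff.mpr fun k => Subtype.ext (hX k k.2)

variable (X : SubMulAction (ConjAct G) G) [Finite X]

instance finiteIndex_center_closure : (center (closure (X : Set G))).FiniteIndex :=
  finiteIndex_of_le (ker_conjPermHom_closure_le_center X)

theorem index_center_closure_le_factorial :
    (center (closure (X : Set G))).index ≤ (Nat.card X).factorial :=
  calc (center (closure (X : Set G))).index
      ≤ (conjPermHom X (closure (X : Set G))).ker.index :=
        index_antitone (ker_conjPermHom_closure_le_center X)
    _ = Nat.card (conjPermHom X (closure (X : Set G))).range := index_ker _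
    _ ≤ Nat.card (Equiv.Perm X) := card_le_card_group _
    _ = (Nat.card X).factorial := Nat.card_perm

theorem finite_and_card_commutator_closure_le :
    Finite ↥⁅closure (X : Set G), closure (X : Set G)⁆ ∧
      Nat.card ↥⁅closure (X : Set G), closure (X : Set G)⁆ ≤
        cardCommutatorBound ((Nat.card X).factorial ^ 2) := by
  set H := closure (X : Set G)
  have hmap : (_root_.commutator H).map H.subtype = ⁅H, H⁆ := map_subtype_commutator H
  refine ⟨hmap ▸ Finite.of_equiv _ (equivMapOfInjective _ _ H.subtype_injective).toEquiv, ?_⟩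
  rw [← hmap, card_subtype]
  exact card_commutator_le_of_finiteIndex_center.trans
    (cardCommutatorBound_mono (Nat.pow_le_pow_left (index_center_closure_le_factorial X) 2))

end ConjugationInvariant

theorem map_mem_wordValues {α G H : Type*} [Group G] [Group H] {w : FreeGroup α} (φ : G →* H)
    {x : G} (hx : x ∈ wordValues w G) : φ x ∈ wordValues w H := by
  obtain ⟨f, rfl⟩ := hx
  exact ⟨φ ∘ f, (FreeGroup.lift_unique (φ.comp (FreeGroup.lift f)) fun _ => by simp).symm⟩

def wordValuesConjAct {α : Type*} (w : FreeGroup α) (G : Type*) [Group G] :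
    SubMulAction (ConjAct G) G where
  carrier := wordValues w G
  smul_mem' c _ hx := by
    rw [ConjAct.smul_def, ← MulAut.conj_apply]
    exact map_mem_wordValues (MulAut.conj (ConjAct.ofConjAct c)).toMonoidHom hx

/-- If a word `w` takes only finitely many, at most `m`, values in a group `G`,
then the order of the commutator subgroup `w(G)'` of the verbal subgroup is bounded by a
function of `m` (and `w`). -/
theorem stmt0 {α : Type*} (w : FreeGroup α) :
    ∃ f : ℕ → ℕ, ∀ (m : ℕ) (G : Type*) [Group G],
      (wordValues w G).Finite → Nat.card (wordValues w G) ≤ m →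
      Finite ↥(⁅verbalSubgroup w G, verbalSubgroup w G⁆ : Subgroup G) ∧
        Nat.card ↥(⁅verbalSubgroup w G, verbalSubgroup w G⁆ : Subgroup G) ≤ f m := by
  refine ⟨fun m => cardCommutatorBound (m.factorial ^ 2), fun m G _ hfin hcard => ?_⟩
  have : Finite (wordValuesConjAct w G) := hfin
  obtain ⟨hfinite, hbound⟩ := finite_and_card_commutator_closure_le (wordValuesConjAct w G)
  exact ⟨hfinite, hbound.trans
    (cardCommutatorBound_mono (Nat.pow_le_pow_left (Nat.factorial_le hcard) 2))⟩
end

section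
/- Let G be a profinite group and g an element of G whose conjugacy class g^G has cardinality strictly less than 2^{\aleph_0}. Then the conjugacy class g^G is finite. -/
/-!
Conjugation by a fixed element is a homeomorphism of `G` preserving the conjugacy class `g^G`,
which is compact as a continuous image of `G`. If `g^G` is infinite, compactness gives it an
accumulation point inside it, and homogeneity makes every point of `g^G` one: `g^G` is a nonempty
compact perfect set. In a Hausdorff space such a set contains a Cantor scheme (split it repeatedly
into two disjoint nonempty perfect pieces), hence has at least `2^ℵ₀` points.
-/

open Cardinal Filter Set Function MulAction

namespace Perfect

variable {α : Type*} [TopologicalSpace α] [T25Space α] {C : Set α}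

theorem exists_bool_splitting (hC : Perfect C) (hne : C.Nonempty) :
    ∃ E : Bool → Set α, (∀ b, Perfect (E b) ∧ (E b).Nonempty ∧ E b ⊆ C) ∧
      Pairwise (Disjoint on E) := by
  obtain ⟨C₀, C₁, h₀, h₁, hdisj⟩ := hC.splitting hne
  refine ⟨fun b => cond b C₁ C₀, fun b => by cases b <;> assumption, ?_⟩
  intro b b' hbb'
  cases b <;> cases b' <;> simp_all [onFun, hdisj.symm]

theorem exists_nat_bool_injection_of_isCompact (hC : Perfect C) (hne : C.Nonempty)
    (hK : IsCompact C) : ∃ f : (ℕ → Bool) → α, range f ⊆ C ∧ Injective f := by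
  let P : Set α → Prop := fun D => Perfect D ∧ D.Nonempty ∧ D ⊆ C
  choose E hEP hEdisj using fun (D : Set α) (hD : P D) => hD.1.exists_bool_splitting hD.2.1
  -- `A σ n` is the piece of the scheme selected by the first `n` digits of `σ`.
  let A : (ℕ → Bool) → ℕ → {D // P D} := fun σ n =>
    Nat.rec ⟨C, hC, hne, subset_rfl⟩
      (fun k D => ⟨E D.1 D.2 (σ k), (hEP _ _ _).1, (hEP _ _ _).2.1,
        (hEP _ _ _).2.2.trans D.2.2.2⟩) n
  have hA_succ (σ : ℕ → Bool) (n : ℕ) : (A σ (n + 1)).1 = E (A σ n).1 (A σ n).2 (σ n) := rfl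
  have hA_congr (σ τ : ℕ → Bool) (n : ℕ) (h : ∀ m < n, σ m = τ m) : A σ n = A τ n := by
    induction n with
    | zero => rfl
    | succ n ih =>
      apply Subtype.ext
      rw [hA_succ, hA_succ, ih fun m hm => h m (by omega), h n n.lt_succ_self]
  have hA_nonempty (σ : ℕ → Bool) : (⋂ n, (A σ n).1).Nonempty :=
    hK.nonempty_iInter_of_sequence_nonempty_isCompact_isClosed _
      (fun n => (hEP _ _ (σ n)).2.2) (fun n => (A σ n).2.2.1) (fun n => (A σ n).2.1.closed)
  choose f hf using hA_nonempty
  refine ⟨f, range_subset_iff.2 fun σ => mem_iInter.1 (hf σ) 0, fun σ τ hστ => ?_⟩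
  by_contra hστ_ne
  have hdiff : ∃ n, σ n ≠ τ n := by simpa [funext_iff] using hστ_ne
  let n := Nat.find hdiff
  have hσ : f σ ∈ (A σ (n + 1)).1 := mem_iInter.1 (hf σ) (n + 1)
  have hτ : f τ ∈ (A τ (n + 1)).1 := mem_iInter.1 (hf τ) (n + 1)
  rw [hA_succ, hA_congr σ τ n fun m hm => not_not.1 (Nat.find_min hdiff hm)] at hσ
  rw [hA_succ] at hτ
  exact disjoint_left.1 (hEdisj _ _ (Nat.find_spec hdiff)) hσ (hστ ▸ hτ)

theorem continuum_le_mk_of_isCompact (hC : Perfect C) (hne : C.Nonempty) (hK : IsCompact C) :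
    𝔠 ≤ #C := by
  obtain ⟨f, hfC, hf⟩ := hC.exists_nat_bool_injection_of_isCompact hne hK
  simpa using lift_mk_le_lift_mk_of_injective (hf.codRestrict (s := C) fun σ => hfC ⟨σ, rfl⟩)

end Perfect

theorem MulAction.preperfect_orbit_of_accPt {M X : Type*} [Group M] [MulAction M X]
    [TopologicalSpace X] [ContinuousConstSMul M X] {x : X} (hx : AccPt x (𝓟 (orbit M x))) :
    Preperfect (orbit M x) := by
  rintro _ ⟨c, rfl⟩
  have := hx.map (continuous_const_smul c).continuousAt (MulAction.injective c)
  rwa [map_principal, image_smul, smul_orbit] at this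

theorem range_inv_mul_mul_eq_orbit_conjAct {G : Type*} [Group G] (g : G) :
    range (fun x : G => x⁻¹ * g * x) = orbit (ConjAct G) g := by
  ext y
  rw [ConjAct.mem_orbit_conjAct, isConj_comm, isConj_iff]
  exact ⟨fun ⟨x, hx⟩ => ⟨x⁻¹, by simpa using hx⟩, fun ⟨c, hc⟩ => ⟨c⁻¹, by simpa using hc⟩⟩

theorem stmt1_general {G : Type*} [Group G] [TopologicalSpace G] [IsTopologicalGroup G]
    [CompactSpace G] [T2Space G] (g : G)
    (h : #(Set.range fun x : G => x⁻¹ * g * x) < Cardinal.continuum) :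
    (Set.range fun x : G => x⁻¹ * g * x).Finite := by
  have hK : IsCompact (range fun x : G => x⁻¹ * g * x) := isCompact_range (by fun_prop)
  rw [range_inv_mul_mul_eq_orbit_conjAct] at h hK ⊢
  by_contra hinf
  obtain ⟨x, hx, hxacc⟩ := Set.Infinite.exists_accPt_of_subset_isCompact hinf hK subset_rfl
  rw [← orbit_eq_iff.2 hx] at hK hxacc h
  have hperf : Perfect (orbit (ConjAct G) x) := ⟨hK.isClosed, preperfect_orbit_of_accPt hxacc⟩
  exact (hperf.continuum_le_mk_of_isCompact ⟨x, mem_orbit_self x⟩ hK).not_gt h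

/-- In a profinite group, an element whose conjugacy class has fewer than
`2^ℵ₀` elements has a finite conjugacy class. -/
theorem stmt1 {G : Type*} [Group G] [TopologicalSpace G] [IsTopologicalGroup G]
    [CompactSpace G] [T2Space G] [TotallyDisconnectedSpace G] (g : G)
    (h : #(Set.range fun x : G => x⁻¹ * g * x) < Cardinal.continuum) :
    (Set.range fun x : G => x⁻¹ * g * x).Finite :=
  stmt1_general g h
end

section
/- Let G be a profinite group and g an element of G whose conjugacy class g^G has cardinality strictly less than 2^{\aleph_0}. Then the centralizer C_G(g) is an open subgroup of G. -/
/-!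
The conjugacy class of `g` is in bijection with `G ⧸ C_G(g)`, a compact Hausdorff space on which
`G` acts transitively by homeomorphisms. If `C_G(g)` is not open, the quotient is not discrete, so
by homogeneity it has no isolated point at all. In a nonempty compact Hausdorff space without
isolated points, repeatedly splitting perfect sets into two disjoint perfect pieces gives a Cantor
scheme whose branches pick out `2^ℵ₀` distinct points.
-/

open Cardinal Function MulAction

theorem exists_injective_nat_bool_of_splitting {X : Type*} [TopologicalSpace X] [CompactSpace X]
    (P : Set X → Prop) (hP : ∀ S, P S → IsClosed S ∧ S.Nonempty) (huniv : P Set.univ)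
    (hsplit : ∀ S, P S → ∃ C : Bool → Set X, (∀ b, P (C b) ∧ C b ⊆ S) ∧ Pairwise (Disjoint on C)) :
    ∃ f : (ℕ → Bool) → X, Injective f := by
  choose! step hstep hdisj using hsplit
  let K : (ℕ → Bool) → ℕ → Set X := fun x n => Nat.rec Set.univ (fun n S => step S (x n)) n
  have hK : ∀ x n, P (K x n) := fun x n => by
    induction n with
    | zero => exact huniv
    | succ n ih => exact (hstep _ ih (x n)).1
  have hK_anti : ∀ x n, K x (n + 1) ⊆ K x n := fun x n => (hstep _ (hK x n) (x n)).2
  have hK_prefix : ∀ x y n, (∀ i < n, x i = y i) → K x n = K y n := by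
    intro x y n hxy
    induction n with
    | zero => rfl
    | succ n ih =>
      change step (K x n) (x n) = step (K y n) (y n)
      rw [ih fun i hi => hxy i (Nat.lt_succ_of_lt hi), hxy n n.lt_succ_self]
  have hbranch : ∀ x, (⋂ n, K x n).Nonempty := fun x =>
    IsCompact.nonempty_iInter_of_sequence_nonempty_isCompact_isClosed _ (hK_anti x)
      (fun n => (hP _ (hK x n)).2) (hP _ (hK x 0)).1.isCompact fun n => (hP _ (hK x n)).1
  choose f hf using hbranch
  have hfK : ∀ x n, f x ∈ K x n := fun x => Set.mem_iInter.mp (hf x)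
  refine ⟨f, fun x y hxy => funext fun k => ?_⟩
  -- branches that first differ at `i` pass through disjoint nodes at level `i + 1`
  suffices ∀ n, ∀ i < n, x i = y i from this (k + 1) k k.lt_succ_self
  intro n
  induction n with
  | zero => simp
  | succ n ih =>
    intro i hi
    rcases Nat.lt_succ_iff_lt_or_eq.mp hi with hi | rfl
    · exact ih i hi
    by_contra hne
    have hy : f x ∈ step (K x i) (y i) := by
      rw [hxy, hK_prefix x y i ih]
      exact hfK y (i + 1)
    exact Set.disjoint_left.mp (hdisj _ (hK x i) hne) (hfK x (i + 1)) hy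

theorem continuum_le_mk_of_perfectSpace {X : Type*} [TopologicalSpace X] [T2Space X]
    [CompactSpace X] [PerfectSpace X] [Nonempty X] : 𝔠 ≤ #X := by
  obtain ⟨f, hf⟩ := exists_injective_nat_bool_of_splitting (fun S => Perfect S ∧ S.Nonempty)
    (fun S hS => ⟨hS.1.closed, hS.2⟩) ⟨PerfectSpace.univ_perfect X, Set.univ_nonempty⟩
    fun S ⟨hS, hne⟩ => by
      obtain ⟨C₀, C₁, ⟨h₀, h₀ne, h₀S⟩, ⟨h₁, h₁ne, h₁S⟩, hd⟩ := hS.splitting hne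
      exact ⟨fun b => cond b C₀ C₁, Bool.forall_bool.2 ⟨⟨⟨h₁, h₁ne⟩, h₁S⟩, ⟨⟨h₀, h₀ne⟩, h₀S⟩⟩,
        pairwise_disjoint_on_bool.2 hd⟩
  simpa using lift_mk_le_lift_mk_of_injective hf

theorem QuotientGroup.perfectSpace_of_not_isOpen {G : Type*} [Group G] [TopologicalSpace G]
    [IsTopologicalGroup G] {H : Subgroup G} (hH : ¬IsOpen (H : Set G)) :
    PerfectSpace (G ⧸ H) := by
  rw [perfectSpace_iff_forall_not_isolated]
  intro x
  rw [Filter.neBot_iff, Ne, ← isOpen_singleton_iff_punctured_nhds,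
    ← IsPretransitive.discreteTopology_iff G, QuotientGroup.discreteTopology_iff]
  exact hH

theorem ConjAct.orbit_eq_range_inv_mul_mul {G : Type*} [Group G] (g : G) :
    orbit (ConjAct G) g = Set.range fun x : G => x⁻¹ * g * x := by
  ext y
  rw [mem_orbit_conjAct, isConj_comm, isConj_iff, Set.mem_range]
  exact ⟨fun ⟨c, hc⟩ => ⟨c⁻¹, by simpa using hc⟩, fun ⟨x, hx⟩ => ⟨x⁻¹, by simpa using hx⟩⟩

theorem mk_quotient_centralizer_eq {G : Type*} [Group G] (g : G) :
    #(G ⧸ Subgroup.centralizer {g}) = #(Set.range fun x : G => x⁻¹ * g * x) := by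
  rw [← ConjAct.orbit_eq_range_inv_mul_mul]
  exact (mk_congr ((orbitEquivQuotientStabilizer (ConjAct G) g).trans
    (Subgroup.quotientEquivOfEq (ConjAct.stabilizer_eq_centralizer g)))).symm

theorem stmt2_general {G : Type*} [Group G] [TopologicalSpace G] [IsTopologicalGroup G]
    [CompactSpace G] [T2Space G] (g : G)
    (h : #(Set.range fun x : G => x⁻¹ * g * x) < Cardinal.continuum) :
    IsOpen ((Subgroup.centralizer {g} : Subgroup G) : Set G) := by
  have : IsClosed ((Subgroup.centralizer {g} : Subgroup G) : Set G) :=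
    Set.isClosed_centralizer {g}
  by_contra hopen
  have := QuotientGroup.perfectSpace_of_not_isOpen hopen
  exact (continuum_le_mk_of_perfectSpace.trans_eq (mk_quotient_centralizer_eq g)).not_gt h

/-- In a profinite group, an element whose conjugacy class has fewer than
`2^ℵ₀` elements has open centralizer. -/
theorem stmt2 {G : Type*} [Group G] [TopologicalSpace G] [IsTopologicalGroup G]
    [CompactSpace G] [T2Space G] [TotallyDisconnectedSpace G] (g : G)
    (h : #(Set.range fun x : G => x⁻¹ * g * x) < Cardinal.continuum) :
    IsOpen ((Subgroup.centralizer {g} : Subgroup G) : Set G) :=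
  stmt2_general g h
end

section
/- Every finite non-abelian group contains a non-abelian metabelian subgroup. -/
/-!
Take a non-abelian subgroup `H` that is minimal under inclusion, so that every proper subgroup
of `H` is abelian. Such a group is solvable (Miller–Moreno): for a Sylow subgroup `P` that is
neither trivial nor everything, either `P` is normal, or its normalizer is proper, hence abelian,
hence centralizes `P`, and Burnside's transfer theorem gives a normal `p`-complement. Either way
there is a nontrivial proper normal subgroup, which is abelian, and the quotient inherits the
hypothesis, so induction on the order applies. Solvability makes `H'` proper, hence abelian.
-/

open Subgroup

section ProperSubgroupsCommutative

variable {K : Type*} [Group K]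

theorem forall_ne_top_isMulCommutative_of_surjective {L : Type*} [Group L] {f : K →* L}
    (hf : Function.Surjective f) (h : ∀ S : Subgroup K, S ≠ ⊤ → IsMulCommutative S) :
    ∀ S : Subgroup L, S ≠ ⊤ → IsMulCommutative S := by
  intro S hS
  have hcomap : S.comap f ≠ ⊤ := fun htop ↦
    hS (by rw [← map_comap_eq_self_of_surjective hf S, htop, ← MonoidHom.range_eq_map,
      MonoidHom.range_eq_top_of_surjective f hf])
  have := h _ hcomap
  rw [← map_comap_eq_self_of_surjective hf S]
  infer_instance

theorem Sylow.exists_normal_ne_bot_ne_top_of_forall_ne_top_isMulCommutative [Finite K]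
    (h : ∀ S : Subgroup K, S ≠ ⊤ → IsMulCommutative S) {p : ℕ} [Fact p.Prime] (P : Sylow p K)
    (hbot : (P : Subgroup K) ≠ ⊥) (htop : (P : Subgroup K) ≠ ⊤) :
    ∃ N : Subgroup K, N.Normal ∧ N ≠ ⊥ ∧ N ≠ ⊤ := by
  by_cases hnorm : normalizer (P : Set K) = ⊤
  · exact ⟨P, normalizer_eq_top_iff.mp hnorm, hbot, htop⟩
  have := h _ hnorm
  have hcent : normalizer (P : Set K) ≤ centralizer (P : Set K) :=
    (le_centralizer (H := normalizer (P : Set K))).trans (centralizer_le le_normalizer)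
  have hcompl := MonoidHom.ker_transferSylow_isComplement' P hcent
  refine ⟨(MonoidHom.transferSylow P hcent).ker, MonoidHom.normal_ker _, fun hN ↦ htop ?_,
    fun hN ↦ hbot ?_⟩
  · exact isComplement'_bot_left.mp (hN ▸ hcompl)
  · exact isComplement'_top_left.mp (hN ▸ hcompl)

theorem isSolvable_of_forall_ne_top_isMulCommutative [Finite K]
    (h : ∀ S : Subgroup K, S ≠ ⊤ → IsMulCommutative S) : Group.IsSolvable K := by
  induction hn : Nat.card K using Nat.strong_induction_on generalizing K with
  | _ n ih =>
  subst hn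
  rcases subsingleton_or_nontrivial K with hK | hK
  · infer_instance
  obtain ⟨p, hp, hdvd⟩ := Nat.exists_prime_and_dvd (Finite.one_lt_card (α := K)).ne'
  have := Fact.mk hp
  obtain ⟨P⟩ : Nonempty (Sylow p K) := Sylow.nonempty
  by_cases htop : (P : Subgroup K) = ⊤
  · have hpK : IsPGroup p K := (P.2.of_equiv (MulEquiv.subgroupCongr htop)).of_equiv topEquiv
    have := hpK.isNilpotent
    infer_instance
  obtain ⟨N, hN, hbot, hNtop⟩ :=
    P.exists_normal_ne_bot_ne_top_of_forall_ne_top_isMulCommutative h (P.ne_bot_of_dvd_card hdvd)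
      htop
  have := h N hNtop
  have hsolvN : Group.IsSolvable N := Group.isSolvable_of_comm mul_comm'
  have hcard : Nat.card (K ⧸ N) < Nat.card K := by
    have hmul := card_eq_card_quotient_mul_card_subgroup N
    have hN1 := (one_lt_card_iff_ne_bot N).mpr hbot
    have hpos : 0 < Nat.card (K ⧸ N) := Nat.card_pos
    nlinarith
  have hsolvQ : Group.IsSolvable (K ⧸ N) := ih _ hcard
    (forall_ne_top_isMulCommutative_of_surjective (QuotientGroup.mk'_surjective N) h) rfl
  exact (Group.isSolvable_iff_subgroup_quotient N).mpr ⟨hsolvN, hsolvQ⟩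

theorem derivedSeries_two_eq_bot_of_forall_ne_top_isMulCommutative
    (h : ∀ S : Subgroup K, S ≠ ⊤ → IsMulCommutative S) (hK : commutator K ≠ ⊤) :
    derivedSeries K 2 = ⊥ := by
  have := h _ hK
  rw [derivedSeries_succ, derivedSeries_one]
  exact commutator_self_eq_bot_iff.mpr this

end ProperSubgroupsCommutative

theorem exists_minimal_not_isMulCommutative {G : Type*} [Group G] [Finite G]
    (hG : ¬IsMulCommutative G) : ∃ H : Subgroup G, ¬IsMulCommutative H ∧
      ∀ S : Subgroup H, S ≠ ⊤ → IsMulCommutative S := by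
  have htop : ¬IsMulCommutative (⊤ : Subgroup G) := by
    simpa [isMulCommutative_iff_of_setLike, isMulCommutative_iff] using hG
  obtain ⟨H, hmin⟩ := exists_minimal_of_wellFoundedLT (fun H : Subgroup G ↦ ¬IsMulCommutative H)
    ⟨⊤, htop⟩
  refine ⟨H, hmin.prop, fun S hS ↦ ?_⟩
  have hlt : S.map H.subtype < H := by
    have := map_subtype_lt_map_subtype.mpr hS.lt_top
    rwa [← MonoidHom.range_eq_map, range_subtype] at this
  have := not_not.mp (hmin.not_prop_of_lt hlt)
  rw [← comap_map_eq_self_of_injective H.subtype_injective S]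
  exact comap_injective_isMulCommutative _ H.subtype_injective

/-- Every finite non-abelian group contains a non-abelian metabelian subgroup. -/
theorem stmt5 {G : Type*} [Group G] [Finite G] (hna : ∃ a b : G, a * b ≠ b * a) :
    ∃ H : Subgroup G, derivedSeries ↥H 2 = ⊥ ∧ ∃ a b : ↥H, a * b ≠ b * a := by
  have hG : ¬IsMulCommutative G := by simpa [isMulCommutative_iff] using hna
  obtain ⟨H, hH, hmin⟩ := exists_minimal_not_isMulCommutative hG
  have := isSolvable_of_forall_ne_top_isMulCommutative hmin
  have : Nontrivial H := by
    contrapose! hH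
    exact isMulCommutative_iff.mpr fun _ _ ↦ Subsingleton.elim _ _
  refine ⟨H, derivedSeries_two_eq_bot_of_forall_ne_top_isMulCommutative hmin
    (Group.IsSolvable.commutator_lt_top_of_nontrivial H).ne, ?_⟩
  simpa [isMulCommutative_iff] using hH
end

section
/- Every finite group in which the word w_o is a law (w_o(x,y)=1 for all x,y) is abelian. -/
open scoped commutatorElement

/-- The auxiliary word `v(x,y) = [[x^d, y^d]^d, [y^d, x^{-d}]^d]`. -/
def vWord {G : Type*} [Group G] (d : ℕ) (x y : G) : G :=
  ⁅⁅x ^ d, y ^ d⁆ ^ d, ⁅y ^ d, (x⁻¹) ^ d⁆ ^ d⁆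

/-- The signs `ε_i` in Olshanskii's word, with `ε_0 = 1`. -/
def eps (i : ℕ) : ℤ :=
  if i = 0 ∨ i % 10 = 1 ∨ i % 10 = 2 ∨ i % 10 = 3 ∨ i % 10 = 5 ∨ i % 10 = 6 then 1 else -1

/-- Olshanskii's word
`w_o(x,y) = [x,y] v(x,y)^n [x,y]^{ε_1} v(x,y)^{n+1} ⋯ [x,y]^{ε_{h-1}} v(x,y)^{n+h-1}`. -/
def wo {G : Type*} [Group G] (d n h : ℕ) (x y : G) : G :=
  ((List.range h).map fun i => ⁅x, y⁆ ^ eps i * vWord d x y ^ (n + i)).prod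

/-- The set of `w_o`-values in `G`. -/
def woValues (G : Type*) [Group G] (d n h : ℕ) : Set G :=
  {g : G | ∃ x y : G, wo d n h x y = g}

/-!
Argue by induction on `|G|`. A law passes to subgroups and quotients, so the proper subgroups
and proper quotients of a minimal counterexample `G` are abelian. If `G' ≠ G`, then `G'` is
abelian, so `v(x,y) = 1` and `w_o(x,y) = [x,y]^(ε_0 + ⋯ + ε_{h-1}) = [x,y]`; the law then makes
`G` abelian. If `G' = G`, then every proper quotient being abelian forces `G` to be simple, and a
finite simple group whose proper subgroups are abelian is abelian by Burnside's transfer theorem.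
-/

theorem Subgroup.card_lt_of_ne_top {G : Type*} [Group G] [Finite G] {H : Subgroup G}
    (hH : H ≠ ⊤) : Nat.card H < Nat.card G :=
  H.card_le_card_group.lt_of_ne (mt H.card_eq_iff_eq_top.mp hH)

theorem QuotientGroup.card_lt_of_ne_bot {G : Type*} [Group G] [Finite G] {N : Subgroup G}
    [N.Normal] (hN : N ≠ ⊥) : Nat.card (G ⧸ N) < Nat.card G := by
  rw [N.card_eq_card_quotient_mul_card_subgroup]
  exact lt_mul_of_one_lt_right Nat.card_pos (N.one_lt_card_iff_ne_bot.mpr hN)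

theorem IsSimpleGroup.mul_comm_of_forall_subgroup_ne_top {G : Type*} [Group G] [Finite G]
    [IsSimpleGroup G] (hsub : ∀ H : Subgroup G, H ≠ ⊤ → ∀ a ∈ H, ∀ b ∈ H, a * b = b * a) :
    ∀ a b : G, a * b = b * a := by
  by_contra hG
  let p := (Nat.card G).minFac
  have : Fact p.Prime := ⟨Nat.minFac_prime Finite.one_lt_card.ne'⟩
  let P : Sylow p G := default
  have hP_ne_bot : (P : Subgroup G) ≠ ⊥ := P.ne_bot_of_dvd_card (Nat.card G).minFac_dvd
  have hP_ne_top : (P : Subgroup G) ≠ ⊤ := by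
    intro hP
    have : IsPGroup p G := P.isPGroup'.of_equiv (hP ▸ Subgroup.topEquiv)
    exact hG (IsSimpleGroup.comm_iff_isSolvable.mpr (have := this.isNilpotent; inferInstance))
  have hN_ne_top : Subgroup.normalizer (P : Set G) ≠ ⊤ := fun hN =>
    have : (P : Subgroup G).Normal := Subgroup.normalizer_eq_top_iff.mp hN
    (IsSimpleGroup.eq_bot_or_eq_top_of_normal _ this).elim hP_ne_bot hP_ne_top
  have hNC : Subgroup.normalizer (P : Set G) ≤ Subgroup.centralizer (P : Set G) :=
    fun g hg x hx => hsub _ hN_ne_top x (Subgroup.le_normalizer hx) g hg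
  -- Burnside: the kernel of the transfer `G →* P` is a normal complement of `P`.
  have hcompl := MonoidHom.ker_transferSylow_isComplement' P hNC
  have hdisj := MonoidHom.ker_transferSylow_disjoint P hNC P P.2
  rcases IsSimpleGroup.eq_bot_or_eq_top_of_normal _
      (MonoidHom.transferSylow P hNC).normal_ker with hK | hK
  · rw [hK, Subgroup.isComplement'_bot_left] at hcompl
    exact hP_ne_top hcompl
  · rw [hK, top_disjoint] at hdisj
    exact hP_ne_bot hdisj

theorem sum_eps_of_mod_ten_eq_one {h : ℕ} (hh : h % 10 = 1) :
    ∑ i ∈ Finset.range h, eps i = 1 := by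
  obtain ⟨m, rfl⟩ : ∃ m, h = 10 * m + 1 := ⟨h / 10, by omega⟩
  clear hh
  induction m with
  | zero => simp [eps]
  | succ m ih =>
    rw [show 10 * (m + 1) + 1 = 10 * m + 1 + 10 by ring, Finset.sum_range_add, ih]
    have hperiodic (k : ℕ) : eps (10 * m + 1 + k) = eps (k + 1) := by
      simp only [eps]
      congr 1
      apply propext
      omega
    rw [Finset.sum_congr rfl fun k _ => hperiodic k]
    decide

section Word

variable {G H : Type*} [Group G] [Group H] {d n h : ℕ}

theorem map_vWord (f : G →* H) (x y : G) : f (vWord d x y) = vWord d (f x) (f y) := by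
  simp only [vWord, map_commutatorElement, map_pow, map_inv]

theorem map_wo (f : G →* H) (x y : G) :
    f (wo d n h x y) = wo d n h (f x) (f y) := by
  simp only [wo, map_list_prod, List.map_map, Function.comp_def, map_mul, map_zpow, map_pow,
    map_commutatorElement, map_vWord]

theorem wo_law_of_injective (hlaw : ∀ x y : G, wo d n h x y = 1) (f : H →* G)
    (hf : Function.Injective f) (x y : H) : wo d n h x y = 1 :=
  hf (by rw [map_wo, hlaw, map_one])

theorem wo_law_of_surjective (hlaw : ∀ x y : G, wo d n h x y = 1) (f : G →* H)
    (hf : Function.Surjective f) (x y : H) : wo d n h x y = 1 := by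
  obtain ⟨a, rfl⟩ := hf x
  obtain ⟨b, rfl⟩ := hf y
  rw [← map_wo, hlaw, map_one]

theorem wo_eq_commutatorElement_zpow_of_vWord_eq_one {x y : G} (hv : vWord d x y = 1) :
    wo d n h x y = ⁅x, y⁆ ^ ∑ i ∈ Finset.range h, eps i := by
  simp only [wo, hv, one_pow, mul_one]
  induction h with
  | zero => simp
  | succ h ih =>
    rw [List.range_succ, List.map_append, List.prod_append, ih, Finset.sum_range_succ, zpow_add]
    simp

theorem vWord_eq_one_of_commutator_comm
    (hK : ∀ a ∈ commutator G, ∀ b ∈ commutator G, a * b = b * a) (x y : G) :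
    vWord d x y = 1 :=
  commutatorElement_eq_one_iff_mul_comm.mpr <| hK _
    (pow_mem (Subgroup.commutator_mem_commutator (Subgroup.mem_top _) (Subgroup.mem_top _)) d) _
    (pow_mem (Subgroup.commutator_mem_commutator (Subgroup.mem_top _) (Subgroup.mem_top _)) d)

theorem mul_comm_of_wo_law_of_commutator_comm (hh : h % 10 = 1)
    (hlaw : ∀ x y : G, wo d n h x y = 1)
    (hK : ∀ a ∈ commutator G, ∀ b ∈ commutator G, a * b = b * a) (x y : G) :
    x * y = y * x := by
  have hw := hlaw x y
  rw [wo_eq_commutatorElement_zpow_of_vWord_eq_one (vWord_eq_one_of_commutator_comm hK x y),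
    sum_eps_of_mod_ten_eq_one hh, zpow_one] at hw
  exact commutatorElement_eq_one_iff_mul_comm.mp hw

end Word

theorem mul_comm_of_wo_law {G : Type*} [hG : Group G] [Finite G] {d n h : ℕ} (hh : h % 10 = 1)
    (hlaw : ∀ x y : G, wo d n h x y = 1) (a b : G) : a * b = b * a := by
  induction G using Finite.induction_subsingleton_or_nontrivial generalizing hG with
  | hbase G => exact Subsingleton.elim _ _
  | hstep G ih =>
    have hsub (K : Subgroup G) (hK : K ≠ ⊤) : ∀ a ∈ K, ∀ b ∈ K, a * b = b * a :=
      fun a ha b hb => congrArg Subtype.val <| ih K (Subgroup.card_lt_of_ne_top hK)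
        (wo_law_of_injective hlaw K.subtype K.subtype_injective) ⟨a, ha⟩ ⟨b, hb⟩
    rcases eq_or_ne (commutator G) ⊤ with hperfect | hK
    · have : IsSimpleGroup G := ⟨fun N _ => or_iff_not_imp_left.mpr fun hN => by
        have hquot : IsMulCommutative (G ⧸ N) :=
          ⟨⟨ih (G ⧸ N) (QuotientGroup.card_lt_of_ne_bot hN)
            (wo_law_of_surjective hlaw _ (QuotientGroup.mk'_surjective N))⟩⟩
        rw [← top_le_iff, ← hperfect]
        exact Subgroup.Normal.quotient_commutative_iff_commutator_le.mp hquot⟩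
      exact IsSimpleGroup.mul_comm_of_forall_subgroup_ne_top hsub a b
    · exact mul_comm_of_wo_law_of_commutator_comm hh hlaw (hsub _ hK) a b

theorem stmt6_general {G : Type*} [Group G] [Finite G] (d n h : ℕ)
    (hh : h % 10 = 1) (hlaw : ∀ x y : G, wo d n h x y = 1) :
    ∀ a b : G, a * b = b * a :=
  mul_comm_of_wo_law hh hlaw

/-- Every finite group in which the word `w_o` is a law is abelian. -/
theorem stmt6 {G : Type*} [Group G] [Finite G] (d n h : ℕ) (hd : 0 < d) (hn : 0 < n)
    (hh : h % 10 = 1) (hlaw : ∀ x y : G, wo d n h x y = 1) :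
    ∀ a b : G, a * b = b * a :=
  stmt6_general d n h hh hlaw
end

section
/- Let G be a residually finite group such that for every finite quotient Q of G the verbal subgroup w(Q) has order at most N (for a fixed word w and fixed integer N). Then w(G) is finite of order at most N. -/
/-- A group is residually finite if every nontrivial element avoids some normal subgroup
of finite index. -/
def ResiduallyFinite (G : Type*) [Group G] : Prop :=
  ∀ g : G, g ≠ 1 → ∃ N : Subgroup G, N.Normal ∧ N.FiniteIndex ∧ g ∉ N

/-
A finite subset of `w(G)` survives injectively in some finite quotient `G ⧸ K`, where it lands in
`w(G ⧸ K)`; so every finite subset of `w(G)` has at most `N₀` elements, which forces `w(G)` to be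
finite of order at most `N₀`.
-/

section Verbal

variable {α : Type*} (w : FreeGroup α) {G H : Type*} [Group G] [Group H]

lemma image_wordValues_subset (φ : G →* H) : φ '' wordValues w G ⊆ wordValues w H := by
  rintro _ ⟨_, ⟨f, rfl⟩, rfl⟩
  exact ⟨φ ∘ f, (FreeGroup.lift_unique (φ.comp (FreeGroup.lift f)) fun _ => by simp).symm⟩

lemma map_verbalSubgroup_le (φ : G →* H) : (verbalSubgroup w G).map φ ≤ verbalSubgroup w H := by
  rw [verbalSubgroup, MonoidHom.map_closure]
  exact Subgroup.closure_mono (image_wordValues_subset w φ)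

end Verbal

lemma ResiduallyFinite.group_residuallyFinite {G : Type*} [Group G] (hG : ResiduallyFinite G) :
    Group.ResiduallyFinite G :=
  Group.residuallyFinite_iff_exists_finiteIndex.mpr fun g hg =>
    let ⟨N, _, hN, hgN⟩ := hG g hg
    ⟨N, hN, hgN⟩

lemma Group.ResiduallyFinite.exists_finiteIndex_injOn {G : Type*} [Group G]
    [Group.ResiduallyFinite G] {t : Set G} (ht : t.Finite) :
    ∃ K : Subgroup G, K.Normal ∧ K.FiniteIndex ∧ t.InjOn (QuotientGroup.mk : G → G ⧸ K) := by
  have hsep : ∀ p : t × t, ∃ L : FiniteIndexNormalSubgroup G,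
      (p.1 : G) ≠ p.2 → (p.1 : G ⧸ L.toSubgroup) ≠ p.2 := fun p => by
    by_cases hp : (p.1 : G) = p.2
    · exact ⟨.ofSubgroup ⊤, fun h => absurd hp h⟩
    · obtain ⟨L, hL⟩ := exists_finiteIndexNormalSubgroup_of_residuallyFinite _ _ hp
      exact ⟨L, fun _ => hL⟩
  choose L hL using hsep
  have : Finite (t × t) := by have := ht.to_subtype; infer_instance
  refine ⟨⨅ p, (L p).toSubgroup, Subgroup.normal_iInf_normal fun _ => inferInstance,
    Subgroup.finiteIndex_iInf fun _ => inferInstance, fun a ha b hb hab => ?_⟩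
  by_contra hne
  refine hL (⟨a, ha⟩, ⟨b, hb⟩) hne (QuotientGroup.eq.mpr ?_)
  exact Subgroup.mem_iInf.mp (QuotientGroup.eq.mp hab) (⟨a, ha⟩, ⟨b, hb⟩)

lemma ncard_le_of_subset_verbalSubgroup {α : Type*} (w : FreeGroup α) {G : Type*} [Group G]
    [Group.ResiduallyFinite G] {N₀ : ℕ}
    (hquot : ∀ (N : Subgroup G) (_ : N.Normal), N.FiniteIndex →
      Nat.card ↥(verbalSubgroup w (G ⧸ N)) ≤ N₀)
    {t : Set G} (ht : t ⊆ verbalSubgroup w G) (htf : t.Finite) : t.ncard ≤ N₀ := by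
  obtain ⟨K, hK, hKi, hinj⟩ := Group.ResiduallyFinite.exists_finiteIndex_injOn htf
  have himage : (QuotientGroup.mk' K) '' t ⊆ verbalSubgroup w (G ⧸ K) := fun _ ⟨a, ha, hx⟩ =>
    map_verbalSubgroup_le w (QuotientGroup.mk' K) ⟨a, ht ha, hx⟩
  calc t.ncard = ((QuotientGroup.mk' K) '' t).ncard := hinj.ncard_image.symm
    _ ≤ (verbalSubgroup w (G ⧸ K) : Set (G ⧸ K)).ncard := Set.ncard_le_ncard himage (Set.toFinite _)
    _ = Nat.card ↥(verbalSubgroup w (G ⧸ K)) := (Nat.card_coe_set_eq _).symm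
    _ ≤ N₀ := hquot K hK hKi

lemma Set.finite_of_forall_finite_subset_ncard_le {α : Type*} {s : Set α} {n : ℕ}
    (h : ∀ t ⊆ s, t.Finite → t.ncard ≤ n) : s.Finite := by
  by_contra hs
  obtain ⟨t, hts, htf, htc⟩ := Set.Infinite.exists_subset_ncard_eq hs (n + 1)
  have := h t hts htf
  omega

/-- If `G` is residually finite and `|w(Q)| ≤ N₀` for every finite quotient
`Q` of `G`, then `w(G)` is finite of order at most `N₀`. -/
theorem stmt13 {α : Type*} (w : FreeGroup α) {G : Type*} [Group G] (N₀ : ℕ)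
    (hrf : ResiduallyFinite G)
    (hquot : ∀ (N : Subgroup G) (_ : N.Normal), N.FiniteIndex →
      Nat.card ↥(verbalSubgroup w (G ⧸ N)) ≤ N₀) :
    Finite ↥(verbalSubgroup w G) ∧ Nat.card ↥(verbalSubgroup w G) ≤ N₀ := by
  have := hrf.group_residuallyFinite
  have hbound : ∀ t ⊆ (verbalSubgroup w G : Set G), t.Finite → t.ncard ≤ N₀ :=
    fun _ ht htf => ncard_le_of_subset_verbalSubgroup w hquot ht htf
  have hfin := Set.finite_of_forall_finite_subset_ncard_le hbound
  exact ⟨hfin.to_subtype, (Nat.card_coe_set_eq _).trans_le (hbound _ subset_rfl hfin)⟩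
end

section
/- Let G be a profinite group possessing a finite normal series 1 = G_0 ≤ G_1 ≤ ... ≤ G_h = G in which every factor G_{i+1}/G_i is either prosoluble or finite. Let C be the intersection of the centralizers in G of all the finite factors. Then C is an open prosoluble normal subgroup of G. -/
/-!
The centralizer of a finite factor `G_{i+1}/G_i` is the kernel of the conjugation action of `G`
on that finite group, so it has finite index; it is closed because `G_i` is, hence open, and `C`
is a finite intersection of such subgroups.

For prosolubility, let `N` be open normal in `C`. Since `C` is open, `N` is open in the compact
group `G` and so contains an open normal subgroup `W` of `G`. The images of the `G_i` form a
normal series of `C ⧸ N`, whose `i`-th factor is an image of `C ∩ G_{i+1}`. Over a finite factor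
it is abelian, because `C` centralizes `G_{i+1}/G_i`. Over a prosoluble factor the kernel contains
`C ∩ G_{i+1} ∩ W G_i` (as `W ≤ N`), so the factor is a section of `G_{i+1} ⧸ (G_{i+1} ∩ W G_i)`,
which is the prosoluble factor modulo the open normal image of `W`, hence soluble.
-/

/-- A topological group is prosoluble if every quotient by an open normal subgroup is
soluble (for a profinite group this says every finite continuous quotient is soluble). -/
def Prosoluble (G : Type*) [Group G] [TopologicalSpace G] : Prop :=
  ∀ (N : Subgroup G) (_ : N.Normal), IsOpen (N : Set G) → IsSolvable (G ⧸ N)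

open scoped commutatorElement

namespace Subgroup

variable {G : Type*} [Group G]

theorem finiteIndex_centralizer (H : Subgroup G) [H.Normal] [Finite H] :
    (centralizer (H : Set G)).FiniteIndex := by
  refine finiteIndex_of_le (H := (MulAut.conjNormal (H := H)).ker) fun g hg => ?_
  rw [mem_centralizer_iff]
  intro h hh
  have hconj := congr_arg (fun φ : MulAut H => (φ ⟨h, hh⟩ : G)) (MonoidHom.mem_ker.mp hg)
  simp only [MulAut.conjNormal_apply, MulAut.one_apply] at hconj
  rw [mul_inv_eq_iff_eq_mul.mp hconj]

def factorCentralizer (H K : Subgroup G) [K.Normal] : Subgroup G :=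
  (centralizer ((H.map (QuotientGroup.mk' K) : Subgroup (G ⧸ K)) : Set (G ⧸ K))).comap
    (QuotientGroup.mk' K)

variable {H K : Subgroup G} [K.Normal]

theorem mem_factorCentralizer {g : G} :
    g ∈ factorCentralizer H K ↔ ∀ x ∈ H, ⁅x, g⁆ ∈ K := by
  simp only [factorCentralizer, mem_comap, mem_centralizer_iff_commutator_eq_one, coe_map,
    Set.forall_mem_image, SetLike.mem_coe, QuotientGroup.mk'_apply]
  refine forall₂_congr fun x _ => ?_
  rw [← QuotientGroup.eq_one_iff, ← QuotientGroup.mk'_apply K ⁅x, g⁆, map_commutatorElement]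
  rfl

instance normal_factorCentralizer [H.Normal] : (factorCentralizer H K).Normal :=
  have : (H.map (QuotientGroup.mk' K)).Normal := ‹H.Normal›.map _ (QuotientGroup.mk'_surjective K)
  normal_comap _

instance finiteIndex_factorCentralizer [H.Normal] [Finite (H.map (QuotientGroup.mk' K))] :
    (factorCentralizer H K).FiniteIndex := by
  have : (H.map (QuotientGroup.mk' K)).Normal := ‹H.Normal›.map _ (QuotientGroup.mk'_surjective K)
  have := finiteIndex_centralizer (H.map (QuotientGroup.mk' K))
  refine ⟨?_⟩
  rw [factorCentralizer, index_comap_of_surjective _ (QuotientGroup.mk'_surjective K)]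
  exact FiniteIndex.index_ne_zero

variable [TopologicalSpace G] [IsTopologicalGroup G]

theorem isClosed_factorCentralizer (hK : IsClosed (K : Set G)) :
    IsClosed (factorCentralizer H K : Set G) := by
  have : (factorCentralizer H K : Set G) = ⋂ x ∈ H, (fun g => ⁅x, g⁆) ⁻¹' K := by
    ext; simp [mem_factorCentralizer]
  rw [this]
  exact isClosed_biInter fun x _ => hK.preimage (by simp only [commutatorElement_def]; fun_prop)

theorem isOpen_factorCentralizer [H.Normal] [Finite (H.map (QuotientGroup.mk' K))]
    (hK : IsClosed (K : Set G)) : IsOpen (factorCentralizer H K : Set G) :=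
  isOpen_of_isClosed_of_finiteIndex _ (isClosed_factorCentralizer hK)

end Subgroup

namespace Group

theorem isSolvable_of_surjective_of_ker_le {A Y S : Type*} [Group A] [Group Y] [Group S]
    [IsSolvable S] (ψ : A →* Y) (hψ : Function.Surjective ψ) (θ : A →* S)
    (h : θ.ker ≤ ψ.ker) : IsSolvable Y :=
  have : IsSolvable (A ⧸ θ.ker) :=
    isSolvable_of_isSolvable_injective (QuotientGroup.kerLift_injective θ)
  isSolvable_of_surjective (f := QuotientGroup.lift θ.ker ψ h) fun y =>
    let ⟨a, ha⟩ := hψ y; ⟨a, ha⟩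

theorem isSolvable_of_surjective_of_commutator_eq_one {A Y : Type*} [Group A] [Group Y]
    (ψ : A →* Y) (hψ : Function.Surjective ψ) (h : ∀ a b : A, ψ ⁅a, b⁆ = 1) : IsSolvable Y :=
  isSolvable_of_comm fun x y => by
    obtain ⟨a, rfl⟩ := hψ x
    obtain ⟨b, rfl⟩ := hψ y
    rw [← commutatorElement_eq_one_iff_mul_comm, ← map_commutatorElement, h]

theorem isSolvable_of_series {X : Type*} [Group X] {k : ℕ} (H : Fin (k + 1) → Subgroup X)
    [∀ i : Fin k, ((H i.castSucc).subgroupOf (H i.succ)).Normal]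
    (hmono : Monotone H) (hbot : H 0 = ⊥) (htop : H (Fin.last k) = ⊤)
    (hfac : ∀ i : Fin k, IsSolvable (H i.succ ⧸ (H i.castSucc).subgroupOf (H i.succ))) :
    IsSolvable X := by
  have hsolv : ∀ j, IsSolvable (H j) := by
    intro j
    induction j using Fin.induction with
    | zero => rw [hbot]; infer_instance
    | succ i ih =>
      have := hfac i
      exact isSolvable_of_ker_le_range (Subgroup.inclusion (hmono i.castSucc_le_succ))
        (QuotientGroup.mk' ((H i.castSucc).subgroupOf (H i.succ))) (by simp)
  have := hsolv (Fin.last k)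
  rw [htop] at this
  exact isSolvable_of_surjective (f := Subgroup.topEquiv.toMonoidHom) (MulEquiv.surjective _)

end Group

theorem Prosoluble.isSolvable_quotient_sup {G : Type*} [Group G] [TopologicalSpace G]
    [IsTopologicalGroup G] {H K W : Subgroup G} [K.Normal] [W.Normal] (hW : IsOpen (W : Set G))
    (hF : Prosoluble (H.map (QuotientGroup.mk' K))) :
    Group.IsSolvable (H ⧸ (W ⊔ K).subgroupOf H) := by
  have : (W.map (QuotientGroup.mk' K)).Normal := ‹W.Normal›.map _ (QuotientGroup.mk'_surjective K)
  set D := (W.map (QuotientGroup.mk' K)).subgroupOf (H.map (QuotientGroup.mk' K))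
  have hD : IsOpen (D : Set (H.map (QuotientGroup.mk' K))) :=
    ((QuotientGroup.isOpenMap_coe (N := K) _ hW).preimage continuous_subtype_val :)
  have : Group.IsSolvable (H.map (QuotientGroup.mk' K) ⧸ D) := hF D inferInstance hD
  refine Group.isSolvable_of_surjective_of_ker_le (QuotientGroup.mk' _)
    (QuotientGroup.mk'_surjective _)
    ((QuotientGroup.mk' D).comp ((QuotientGroup.mk' K).subgroupMap H)) fun h hh => ?_
  rw [MonoidHom.mem_ker, MonoidHom.comp_apply, QuotientGroup.mk'_apply,
    QuotientGroup.eq_one_iff] at hh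
  rw [QuotientGroup.ker_mk', Subgroup.mem_subgroupOf, ← QuotientGroup.ker_mk' K,
    ← Subgroup.comap_map_eq]
  exact hh

namespace Subgroup

section QuotientImage

variable {G : Type*} [Group G] {C : Subgroup G} (N : Subgroup C) [N.Normal] (H K : Subgroup G)

abbrev quotientImage : Subgroup (C ⧸ N) :=
  (K.subgroupOf C).map (QuotientGroup.mk' N)

variable [K.Normal]

instance normal_quotientImage : (quotientImage N K).Normal :=
  (‹K.Normal›.subgroupOf C).map _ (QuotientGroup.mk'_surjective N)

def factorProj : H.subgroupOf C →*
    quotientImage N H ⧸ (quotientImage N K).subgroupOf (quotientImage N H) :=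
  (QuotientGroup.mk' _).comp ((QuotientGroup.mk' N).subgroupMap _)

theorem factorProj_surjective : Function.Surjective (factorProj N H K) :=
  (QuotientGroup.mk'_surjective _).comp (MonoidHom.subgroupMap_surjective _ _)

variable {N H K}

theorem factorProj_eq_one_iff {a : H.subgroupOf C} :
    factorProj N H K a = 1 ↔ (a : C) ∈ K.subgroupOf C ⊔ N := by
  have hcomap := comap_map_eq (QuotientGroup.mk' N) (K.subgroupOf C)
  rw [QuotientGroup.ker_mk'] at hcomap
  rw [factorProj, MonoidHom.comp_apply, QuotientGroup.mk'_apply, QuotientGroup.eq_one_iff,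
    mem_subgroupOf, ← hcomap]
  rfl

theorem isSolvable_factor_of_commutator_mem (hcomm : ∀ x ∈ H, ∀ c ∈ C, ⁅x, c⁆ ∈ K) :
    Group.IsSolvable (quotientImage N H ⧸ (quotientImage N K).subgroupOf (quotientImage N H)) :=
  Group.isSolvable_of_surjective_of_commutator_eq_one _ (factorProj_surjective N H K)
    fun a b => factorProj_eq_one_iff.mpr (mem_sup_left (hcomm _ a.2 _ b.1.2))

theorem isSolvable_factor_of_prosoluble [TopologicalSpace G] [IsTopologicalGroup G]
    {W : Subgroup G} [W.Normal] (hW : IsOpen (W : Set G)) (hWN : W ≤ N.map C.subtype)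
    (hF : Prosoluble (H.map (QuotientGroup.mk' K))) :
    Group.IsSolvable (quotientImage N H ⧸ (quotientImage N K).subgroupOf (quotientImage N H)) := by
  have := hF.isSolvable_quotient_sup hW
  refine Group.isSolvable_of_surjective_of_ker_le _ (factorProj_surjective N H K)
    ((QuotientGroup.mk' ((W ⊔ K).subgroupOf H)).comp
      ((C.subtype.comp (H.subgroupOf C).subtype).codRestrict H fun a => a.2)) fun a ha => ?_
  rw [MonoidHom.mem_ker, MonoidHom.comp_apply, QuotientGroup.mk'_apply,
    QuotientGroup.eq_one_iff, mem_subgroupOf] at ha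
  change ((a : C) : G) ∈ W ⊔ K at ha
  obtain ⟨w, hw, x, hx, hwx⟩ := mem_sup_of_normal_right.mp ha
  obtain ⟨n, hn, rfl⟩ := hWN hw
  have hx' : n⁻¹ * (a : C) ∈ K.subgroupOf C := by
    rw [mem_subgroupOf, coe_mul, coe_inv, ← hwx, coe_subtype, inv_mul_cancel_left]
    exact hx
  rw [MonoidHom.mem_ker, factorProj_eq_one_iff, ← mul_inv_cancel_left n (a : C)]
  exact mul_mem (mem_sup_right hn) (mem_sup_left hx')

end QuotientImage

end Subgroup

open Subgroup in
theorem prosoluble_of_isOpen_of_series {G : Type*} [Group G] [TopologicalSpace G]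
    [IsTopologicalGroup G] [CompactSpace G] {k : ℕ} (Gs : Fin (k + 1) → Subgroup G)
    [∀ i, (Gs i).Normal] (hmono : Monotone Gs) (hbot : Gs 0 = ⊥) (htop : Gs (Fin.last k) = ⊤)
    {C : Subgroup G} (hC : IsOpen (C : Set G))
    (hfac : ∀ i : Fin k, Prosoluble ((Gs i.succ).map (QuotientGroup.mk' (Gs i.castSucc))) ∨
      ∀ x ∈ Gs i.succ, ∀ c ∈ C, ⁅x, c⁆ ∈ Gs i.castSucc) :
    Prosoluble C := by
  intro N _ hN
  have hNG : IsOpen (N.map C.subtype : Set G) := by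
    rw [coe_map]; exact hC.isOpenMap_subtype_val _ hN
  obtain ⟨W, hW⟩ := IsTopologicalGroup.exist_openNormalSubgroup_sub_clopen_nhds_of_one
    ⟨isClosed_of_isOpen _ hNG, hNG⟩ (N.map C.subtype).one_mem
  refine Group.isSolvable_of_series (fun j => quotientImage N (Gs j))
    (fun i j hij => map_mono (comap_mono (hmono hij)))
    (by simp only [quotientImage, hbot, bot_subgroupOf, Subgroup.map_bot])
    (by simp only [quotientImage, htop, top_subgroupOf,
      map_top_of_surjective _ (QuotientGroup.mk'_surjective N)]) fun i => ?_
  rcases hfac i with hF | hcomm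
  · exact isSolvable_factor_of_prosoluble W.isOpen' hW hF
  · exact isSolvable_factor_of_commutator_mem hcomm

theorem stmt15_general {G : Type*} [Group G] [TopologicalSpace G] [IsTopologicalGroup G]
    [CompactSpace G]
    (k : ℕ) (Gs : Fin (k + 1) → Subgroup G) [hnormal : ∀ i, (Gs i).Normal]
    (hclosed : ∀ i, IsClosed ((Gs i : Subgroup G) : Set G))
    (hmono : Monotone Gs) (hbot : Gs 0 = ⊥) (htop : Gs (Fin.last k) = ⊤)
    (hfac : ∀ i : Fin k,
      Prosoluble ↥((Gs i.succ).map (QuotientGroup.mk' (Gs i.castSucc))) ∨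
      Finite ↥((Gs i.succ).map (QuotientGroup.mk' (Gs i.castSucc)))) :
    ∃ C : Subgroup G,
      (C : Set G) = {g : G |
        ∀ i : Fin k, Finite ↥((Gs i.succ).map (QuotientGroup.mk' (Gs i.castSucc))) →
          ∀ x ∈ Gs i.succ, ⁅x, g⁆ ∈ Gs i.castSucc} ∧
      C.Normal ∧ IsOpen (C : Set G) ∧ Prosoluble ↥C := by
  let C : Subgroup G := ⨅ (i : Fin k)
    (_ : Finite ((Gs i.succ).map (QuotientGroup.mk' (Gs i.castSucc)))),
      Subgroup.factorCentralizer (Gs i.succ) (Gs i.castSucc)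
  have hC : IsOpen (C : Set G) := by
    simp only [C, Subgroup.coe_iInf]
    exact isOpen_iInter_of_finite fun i => isOpen_iInter_of_finite fun _ =>
      Subgroup.isOpen_factorCentralizer (hclosed _)
  refine ⟨C, by ext; simp [C, Subgroup.mem_factorCentralizer],
    Subgroup.normal_iInf_normal fun i => Subgroup.normal_iInf_normal fun _ => inferInstance, hC,
    prosoluble_of_isOpen_of_series Gs hmono hbot htop hC fun i =>
      (hfac i).imp_right fun hfin x hx c hc => ?_⟩
  exact Subgroup.mem_factorCentralizer.mp
    (Subgroup.mem_iInf.mp (Subgroup.mem_iInf.mp hc i) hfin) x hx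

/-- If a profinite group `G` has a finite normal series with every factor
either prosoluble or finite, then the intersection `C` of the centralizers of the finite
factors is an open prosoluble normal subgroup of `G`. Here the factor `G_{i+1}/G_i` is
realized as the image of `G_{i+1}` in `G/G_i`, and the centralizer of that factor is
`{g : G | [G_{i+1}, g] ≤ G_i}`. -/
theorem stmt15 {G : Type*} [Group G] [TopologicalSpace G] [IsTopologicalGroup G]
    [CompactSpace G] [T2Space G] [TotallyDisconnectedSpace G]
    (k : ℕ) (Gs : Fin (k + 1) → Subgroup G) [hnormal : ∀ i, (Gs i).Normal]
    (hclosed : ∀ i, IsClosed ((Gs i : Subgroup G) : Set G))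
    (hmono : Monotone Gs) (hbot : Gs 0 = ⊥) (htop : Gs (Fin.last k) = ⊤)
    (hfac : ∀ i : Fin k,
      Prosoluble ↥((Gs i.succ).map (QuotientGroup.mk' (Gs i.castSucc))) ∨
      Finite ↥((Gs i.succ).map (QuotientGroup.mk' (Gs i.castSucc)))) :
    ∃ C : Subgroup G,
      (C : Set G) = {g : G |
        ∀ i : Fin k, Finite ↥((Gs i.succ).map (QuotientGroup.mk' (Gs i.castSucc))) →
          ∀ x ∈ Gs i.succ, ⁅x, g⁆ ∈ Gs i.castSucc} ∧
      C.Normal ∧ IsOpen (C : Set G) ∧ Prosoluble ↥C :=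
  stmt15_general k Gs (hnormal := hnormal) hclosed hmono hbot htop hfac
end
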